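/- Monotonicity of the hockey-stick divergence between equal-variance Gaussians in the mean shift: let σ > 0, Δ ≥ 0, and μ, μ' ∈ ℝ with |μ − μ'| ≤ Δ. Then for every α ≥ 0, H_α(N(μ,σ²) ‖ N(μ',σ²)) ≤ H_α(N(0,σ²) ‖ N(Δ,σ²)). -/

import Mathlib

open MeasureTheory ProbabilityTheory Real Set
open scoped ENNReal NNReal

/-!
Translating and reflecting both measures by the same map cannot increase `H_α`, so the pair
`(N(μ,σ²), N(μ',σ²))` may be replaced by `(N(0,σ²), N(t,σ²))` with `t = |μ - μ'|`. For this pair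
the likelihood ratio is monotone, so the supremum defining `H_α` is attained on a half-line
`(-∞, θ]`; moving the second mean from `t` to `Δ ≥ t` only decreases the mass of that
half-line, hence increases `P(E) - α Q(E)`.
-/

/-- Hockey-stick divergence: `H_α(P ‖ Q) = sup_{E measurable} (P(E) − α·Q(E))`. -/
noncomputable def hsDiv {X : Type*} [MeasurableSpace X] (α : ℝ) (P Q : Measure X) : ℝ :=
  ⨆ E : {E : Set X // MeasurableSet E}, ((P E).toReal - α * (Q E).toReal)

section HockeyStick

variable {X Y : Type*} [MeasurableSpace X] [MeasurableSpace Y] {α : ℝ}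

lemma le_hsDiv (hα : 0 ≤ α) (P Q : Measure X) [IsFiniteMeasure P] {E : Set X}
    (hE : MeasurableSet E) : (P E).toReal - α * (Q E).toReal ≤ hsDiv α P Q := by
  have hbdd : BddAbove (range fun F : {F : Set X // MeasurableSet F} =>
      (P F).toReal - α * (Q F).toReal) := by
    refine ⟨(P univ).toReal, ?_⟩
    rintro _ ⟨⟨F, -⟩, rfl⟩
    have hPF : (P F).toReal ≤ (P univ).toReal := measureReal_mono (subset_univ F)
    have hQF : 0 ≤ α * (Q F).toReal := by positivity
    dsimp only
    linarith
  exact le_ciSup hbdd ⟨E, hE⟩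

lemma hsDiv_map_le (hα : 0 ≤ α) (P Q : Measure X) [IsFiniteMeasure P] {f : X → Y}
    (hf : Measurable f) : hsDiv α (P.map f) (Q.map f) ≤ hsDiv α P Q := by
  refine ciSup_le fun ⟨E, hE⟩ => ?_
  rw [Measure.map_apply hf hE, Measure.map_apply hf hE]
  exact le_hsDiv hα P Q (hf hE)

end HockeyStick

lemma hsDiv_gaussianReal_le_abs_sub {α : ℝ} (hα : 0 ≤ α) (m m' : ℝ) (v : ℝ≥0) :
    hsDiv α (gaussianReal m v) (gaussianReal m' v) ≤
      hsDiv α (gaussianReal 0 v) (gaussianReal |m - m'| v) := by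
  rcases le_total m' m with h | h
  · have hmap := hsDiv_map_le hα (gaussianReal 0 v) (gaussianReal (m - m') v)
      (measurable_const_sub m)
    rwa [gaussianReal_map_const_sub, gaussianReal_map_const_sub, sub_zero, sub_sub_cancel,
      ← abs_of_nonneg (sub_nonneg.2 h)] at hmap
  · have hmap := hsDiv_map_le hα (gaussianReal 0 v) (gaussianReal (m' - m) v)
      (measurable_add_const m)
    rwa [gaussianReal_map_add_const, gaussianReal_map_add_const, zero_add, sub_add_cancel,
      ← neg_sub, ← abs_of_nonpos (sub_nonpos.2 h)] at hmap

lemma map_add_const_apply_le_of_isLowerSet (μ : Measure ℝ) {c : ℝ} (hc : 0 ≤ c) {S : Set ℝ}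
    (hS : IsLowerSet S) : μ.map (· + c) S ≤ μ S := by
  rw [(measurableEmbedding_addRight c).map_apply]
  exact measure_mono fun x hx => hS (le_add_of_nonneg_right hc) hx

lemma gaussianReal_apply_antitone_of_isLowerSet {v : ℝ≥0} {S : Set ℝ} (hS : IsLowerSet S)
    {t Δ : ℝ} (htΔ : t ≤ Δ) : gaussianReal Δ v S ≤ gaussianReal t v S := by
  have hmap := map_add_const_apply_le_of_isLowerSet (gaussianReal t v) (sub_nonneg.2 htΔ) hS
  rwa [gaussianReal_map_add_const, add_sub_cancel] at hmap

lemma gaussianPDFReal_eq_mul_exp (t : ℝ) (v : ℝ≥0) (x : ℝ) :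
    gaussianPDFReal t v x = gaussianPDFReal 0 v x * exp ((2 * t * x - t ^ 2) / (2 * v)) := by
  rw [gaussianPDFReal, gaussianPDFReal, mul_assoc _ (rexp _), ← exp_add]
  ring_nf

lemma isLowerSet_setOf_gaussianPDFReal_sub_mul_nonneg {v : ℝ≥0} (hv : v ≠ 0) {t α : ℝ} (ht : 0 ≤ t)
    (hα : 0 ≤ α) : IsLowerSet {x | 0 ≤ gaussianPDFReal 0 v x - α * gaussianPDFReal t v x} := by
  -- the likelihood ratio `α · pdf_t / pdf_0 = α · exp ((2tx - t²) / 2v)` is monotone in `x`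
  set r : ℝ → ℝ := fun x => α * exp ((2 * t * x - t ^ 2) / (2 * v))
  have hr : Monotone r := fun y x hyx => by
    dsimp only [r]
    gcongr
  have hset : ∀ x, 0 ≤ gaussianPDFReal 0 v x - α * gaussianPDFReal t v x ↔ r x ≤ 1 := fun x => by
    have h0 := gaussianPDFReal_pos 0 v x hv
    rw [gaussianPDFReal_eq_mul_exp t, sub_nonneg, mul_left_comm]
    exact mul_le_iff_le_one_right h0
  intro x y hyx hx
  exact (hset y).2 ((hr hyx).trans ((hset x).1 hx))

lemma gaussianReal_toReal_sub_mul_eq_setIntegral {v : ℝ≥0} (hv : v ≠ 0) (a b α : ℝ) (G : Set ℝ) :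
    (gaussianReal a v G).toReal - α * (gaussianReal b v G).toReal =
      ∫ x in G, gaussianPDFReal a v x - α * gaussianPDFReal b v x := by
  rw [integral_sub (integrable_gaussianPDFReal a v).restrict
      ((integrable_gaussianPDFReal b v).const_mul α).restrict, integral_const_mul,
    gaussianReal_apply_eq_integral a hv, gaussianReal_apply_eq_integral b hv,
    ENNReal.toReal_ofReal (setIntegral_nonneg_of_ae (ae_of_all _ (gaussianPDFReal_nonneg a v))),
    ENNReal.toReal_ofReal (setIntegral_nonneg_of_ae (ae_of_all _ (gaussianPDFReal_nonneg b v)))]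

lemma hsDiv_gaussianReal_zero_mono_mean {v : ℝ≥0} (hv : v ≠ 0) {α : ℝ} (hα : 0 ≤ α) {t Δ : ℝ}
    (ht : 0 ≤ t) (htΔ : t ≤ Δ) :
    hsDiv α (gaussianReal 0 v) (gaussianReal t v) ≤
      hsDiv α (gaussianReal 0 v) (gaussianReal Δ v) := by
  set f : ℝ → ℝ := fun x => gaussianPDFReal 0 v x - α * gaussianPDFReal t v x
  have hf : StronglyMeasurable f := by fun_prop
  have hfi : Integrable f :=
    (integrable_gaussianPDFReal 0 v).sub ((integrable_gaussianPDFReal t v).const_mul α)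
  -- Neyman–Pearson: the superlevel set `{f ≥ 0}` is optimal, and it is a half-line
  set S := {x | 0 ≤ f x}
  have hS : MeasurableSet S := measurableSet_le measurable_const hf.measurable
  refine ciSup_le fun ⟨G, hG⟩ => ?_
  calc (gaussianReal 0 v G).toReal - α * (gaussianReal t v G).toReal = ∫ x in G, f x :=
        gaussianReal_toReal_sub_mul_eq_setIntegral hv 0 t α G
    _ ≤ ∫ x in S, f x := setIntegral_le_nonneg hG hf hfi
    _ = (gaussianReal 0 v S).toReal - α * (gaussianReal t v S).toReal :=
        (gaussianReal_toReal_sub_mul_eq_setIntegral hv 0 t α S).symm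
    _ ≤ (gaussianReal 0 v S).toReal - α * (gaussianReal Δ v S).toReal := by
        have hΔS := gaussianReal_apply_antitone_of_isLowerSet (v := v)
          (isLowerSet_setOf_gaussianPDFReal_sub_mul_nonneg hv ht hα) htΔ
        exact sub_le_sub_left
          (mul_le_mul_of_nonneg_left (ENNReal.toReal_mono (measure_ne_top _ _) hΔS) hα) _
    _ ≤ hsDiv α (gaussianReal 0 v) (gaussianReal Δ v) := le_hsDiv hα _ _ hS

theorem hsDiv_gaussian_mono_mean_shift_general (σ Δ μ μ' : ℝ) (hσ : 0 < σ)
    (hμ : |μ - μ'| ≤ Δ) (α : ℝ) (hα : 0 ≤ α) :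
    hsDiv α (gaussianReal μ ⟨σ ^ 2, sq_nonneg σ⟩) (gaussianReal μ' ⟨σ ^ 2, sq_nonneg σ⟩) ≤
      hsDiv α (gaussianReal 0 ⟨σ ^ 2, sq_nonneg σ⟩) (gaussianReal Δ ⟨σ ^ 2, sq_nonneg σ⟩) := by
  have hv : (⟨σ ^ 2, sq_nonneg σ⟩ : ℝ≥0) ≠ 0 := fun h => (pow_pos hσ 2).ne' congr($h.1)
  exact (hsDiv_gaussianReal_le_abs_sub hα μ μ' _).trans
    (hsDiv_gaussianReal_zero_mono_mean hv hα (abs_nonneg _) hμ)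

/-- Monotonicity of the hockey-stick divergence between equal-variance Gaussians in the
mean shift: if `|μ − μ'| ≤ Δ` then for every `α ≥ 0`,
`H_α(N(μ,σ²) ‖ N(μ',σ²)) ≤ H_α(N(0,σ²) ‖ N(Δ,σ²))`. -/
theorem hsDiv_gaussian_mono_mean_shift (σ Δ μ μ' : ℝ) (hσ : 0 < σ) (hΔ : 0 ≤ Δ)
    (hμ : |μ - μ'| ≤ Δ) (α : ℝ) (hα : 0 ≤ α) :
    hsDiv α (gaussianReal μ ⟨σ ^ 2, sq_nonneg σ⟩) (gaussianReal μ' ⟨σ ^ 2, sq_nonneg σ⟩) ≤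
      hsDiv α (gaussianReal 0 ⟨σ ^ 2, sq_nonneg σ⟩) (gaussianReal Δ ⟨σ ^ 2, sq_nonneg σ⟩) :=
  hsDiv_gaussian_mono_mean_shift_general σ Δ μ μ' hσ hμ α hα
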